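/- Let N be a d-dimensional real normed space, let k ∈ ℕ with k ≥ 1, and let c₁, …, c_m be distinct points of N with m ≥ 2 (and m ≥ k + 1 so that the radii are defined). For each i let r_i be the smallest r ≥ 0 such that {j : j ≠ i, ‖c_i − c_j‖ ≤ r} has at least k elements, and let G be the graph on {1, …, m} joining i and j whenever the closed balls B(c_i, r_i) and B(c_j, r_j) intersect. Then there exist at least two distinct vertices of G whose degree is less than 5^d · k. -/

import Mathlib

/-!
Let `v` be a point whose radius `R` is minimal among all radii except possibly one. If `v` had
`5 ^ d * k` neighbours, retract `v` and its neighbours radially onto the ball of radius `2 R`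
around `c v`; a volume count with balls of radius `R / 2` finds `k + 1` of the retracted points
pairwise closer than `R`. Since every neighbour `j` satisfies `‖c j - c v‖ ≤ R + r j`, the
retraction barely separates these points, and the one with the largest radius `r a ≥ R` then has
`k` other points strictly inside its influence ball, contradicting the minimality of `r a`.
The two points of smallest radius therefore both have degree `< 5 ^ d * k`.
-/

open Metric Set MeasureTheory Finset Module NormedSpace
open scoped ENNReal

section InfluenceRadius

variable {ι E : Type*} [NormedAddCommGroup E]

def IsInfluenceRadius (k : ℕ) (c : ι → E) (i : ι) (ρ : ℝ) : Prop :=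
  IsLeast {t : ℝ | 0 ≤ t ∧ k ≤ {j : ι | j ≠ i ∧ ‖c i - c j‖ ≤ t}.ncard} ρ

variable {k : ℕ} {c : ι → E} {i : ι} {ρ : ℝ}

lemma IsInfluenceRadius.pos (h : IsInfluenceRadius k c i ρ) (hk : 1 ≤ k)
    (hc : Function.Injective c) : 0 < ρ := by
  obtain ⟨-, hcard⟩ := h.1
  obtain ⟨j, hji, hj⟩ := Set.nonempty_of_ncard_ne_zero (Nat.one_le_iff_ne_zero.1 (hk.trans hcard))
  exact (norm_pos_iff.2 (sub_ne_zero.2 (hc.ne hji.symm))).trans_le hj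

lemma IsInfluenceRadius.exists_le_norm_sub [Finite ι] (h : IsInfluenceRadius k c i ρ)
    (hk : 1 ≤ k) {T : Finset ι} (hiT : i ∉ T) (hT : k ≤ #T) :
    ∃ j ∈ T, ρ ≤ ‖c i - c j‖ := by
  have hne : T.Nonempty := card_pos.1 (by omega)
  obtain ⟨j, hj, hmax⟩ := T.exists_max_image (fun j => ‖c i - c j‖) hne
  refine ⟨j, hj, h.2 ⟨norm_nonneg _, hT.trans ?_⟩⟩
  rw [← Set.ncard_coe_finset]
  exact Set.ncard_le_ncard (fun l hl => ⟨fun hli => hiT (hli ▸ hl), hmax l hl⟩)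

end InfluenceRadius

section Retraction

variable {E : Type*} [NormedAddCommGroup E] [NormedSpace ℝ E]

lemma norm_sub_le_mul_norm_normalize_sub_add {x y : E} (hyx : ‖y‖ ≤ ‖x‖) :
    ‖x - y‖ ≤ ‖y‖ * ‖normalize x - normalize y‖ + (‖x‖ - ‖y‖) := by
  have hsplit : x - y = ‖y‖ • (normalize x - normalize y) + (‖x‖ - ‖y‖) • normalize x := by
    conv_lhs => rw [← norm_smul_normalize x, ← norm_smul_normalize y]
    module
  have hnx : ‖(‖x‖ - ‖y‖) • normalize x‖ ≤ ‖x‖ - ‖y‖ := by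
    rcases eq_or_ne x 0 with rfl | hx
    · simp only [normalize_zero_eq_zero, smul_zero, norm_zero] at hyx ⊢
      linarith
    · rw [norm_smul, norm_normalize_eq_one_iff.2 hx, mul_one, Real.norm_of_nonneg (sub_nonneg.2 hyx)]
  calc ‖x - y‖ ≤ ‖‖y‖ • (normalize x - normalize y)‖ + ‖(‖x‖ - ‖y‖) • normalize x‖ :=
        hsplit ▸ norm_add_le _ _
    _ ≤ ‖y‖ * ‖normalize x - normalize y‖ + (‖x‖ - ‖y‖) := by
        rw [norm_smul, norm_norm]; gcongr

noncomputable def radialRetraction (v : E) (ρ : ℝ) (p : E) : E :=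
  if ‖p - v‖ ≤ ρ then p else v + ρ • normalize (p - v)

lemma radialRetraction_of_norm_sub_le {v p : E} {ρ : ℝ} (h : ‖p - v‖ ≤ ρ) :
    radialRetraction v ρ p = p :=
  if_pos h

lemma radialRetraction_sub_of_lt_norm_sub {v p : E} {ρ : ℝ} (h : ρ < ‖p - v‖) :
    radialRetraction v ρ p - v = ρ • normalize (p - v) := by
  rw [radialRetraction, if_neg h.not_ge, add_sub_cancel_left]

lemma norm_radialRetraction_sub_le (v p : E) {ρ : ℝ} (hρ : 0 ≤ ρ) :
    ‖radialRetraction v ρ p - v‖ ≤ ρ := by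
  rcases le_or_gt ‖p - v‖ ρ with h | h
  · rwa [radialRetraction_of_norm_sub_le h]
  · rw [radialRetraction_sub_of_lt_norm_sub h, norm_smul,
      norm_normalize_eq_one_iff.2 (norm_pos_iff.1 (hρ.trans_lt h)), Real.norm_of_nonneg hρ, mul_one]

/-- For `q` no farther from `v` than `p`, retracting shrinks `‖p - q‖` by at most the displacement
`max 0 (‖p - v‖ - ρ)` of `p` alone: the displacement of `q` does not count. -/
lemma norm_sub_lt_of_norm_radialRetraction_sub_lt {v p q : E} {ρ δ : ℝ} (hδ : δ ≤ ρ)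
    (hqp : ‖q - v‖ ≤ ‖p - v‖)
    (h : ‖radialRetraction v ρ p - radialRetraction v ρ q‖ < δ) :
    ‖p - q‖ < max δ (‖p - v‖ - ρ + δ) := by
  rcases le_or_gt ‖p - v‖ ρ with hp | hp
  · rw [radialRetraction_of_norm_sub_le hp, radialRetraction_of_norm_sub_le (hqp.trans hp)] at h
    exact lt_max_of_lt_left h
  refine lt_max_of_lt_right ?_
  have hρ : 0 < ρ := (norm_nonneg _).trans_lt h |>.trans_le hδ
  have hpv : p - v ≠ 0 := norm_pos_iff.1 (hρ.trans hp)
  have hp' : ‖p - radialRetraction v ρ p‖ = ‖p - v‖ - ρ := by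
    have : p - radialRetraction v ρ p = (‖p - v‖ - ρ) • normalize (p - v) := by
      rw [← sub_sub_sub_cancel_right _ _ v, radialRetraction_sub_of_lt_norm_sub hp, sub_smul,
        norm_smul_normalize]
    rw [this, norm_smul, norm_normalize_eq_one_iff.2 hpv, mul_one,
      Real.norm_of_nonneg (sub_nonneg.2 hp.le)]
  rcases le_or_gt ‖q - v‖ ρ with hq | hq
  · rw [radialRetraction_of_norm_sub_le hq] at h
    calc ‖p - q‖ ≤ ‖p - radialRetraction v ρ p‖ + ‖radialRetraction v ρ p - q‖ :=
          norm_sub_le_norm_sub_add_norm_sub _ _ _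
      _ < ‖p - v‖ - ρ + δ := by rw [hp']; linarith
  · have hu : ρ * ‖normalize (p - v) - normalize (q - v)‖ < δ := by
      rwa [← sub_sub_sub_cancel_right _ _ v, radialRetraction_sub_of_lt_norm_sub hp,
        radialRetraction_sub_of_lt_norm_sub hq, ← smul_sub, norm_smul,
        Real.norm_of_nonneg hρ.le] at h
    have := norm_sub_le_mul_norm_normalize_sub_add hqp
    rw [sub_sub_sub_cancel_right] at this
    -- `ρ * ‖u‖ < δ ≤ ρ` forces `‖u‖ < 1` for `u` the difference of the normalized vectors, so
    -- the bound `‖q - v‖ * (‖u‖ - 1)` is largest at `‖q - v‖ = ρ`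
    nlinarith

end Retraction

section Packing

open Classical in
lemma sum_measure_le_mul_measure_biUnion {α ι : Type*} [MeasurableSpace α] (μ : Measure α)
    {s : Finset ι} {A : ι → Set α} (hA : ∀ j ∈ s, MeasurableSet (A j)) {k : ℕ}
    (hk : ∀ z, #{j ∈ s | z ∈ A j} ≤ k) :
    ∑ j ∈ s, μ (A j) ≤ k * μ (⋃ j ∈ s, A j) := by
  have hU : MeasurableSet (⋃ j ∈ s, A j) := s.measurableSet_biUnion hA
  calc ∑ j ∈ s, μ (A j) = ∫⁻ z, ∑ j ∈ s, (A j).indicator 1 z ∂μ := by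
        rw [lintegral_finsetSum _ fun j hj => measurable_one.indicator (hA j hj)]
        exact sum_congr rfl fun j hj => (lintegral_indicator_one (hA j hj)).symm
    _ ≤ ∫⁻ z, (⋃ j ∈ s, A j).indicator (fun _ => (k : ℝ≥0∞)) z ∂μ := by
        refine lintegral_mono fun z => ?_
        by_cases hz : z ∈ ⋃ j ∈ s, A j
        · rw [indicator_of_mem hz]
          simp only [indicator_apply, Pi.one_apply, sum_boole]
          exact_mod_cast hk z
        · simp only [mem_iUnion, not_exists] at hz
          rw [sum_eq_zero fun j hj => indicator_of_notMem (hz j hj) _]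
          exact zero_le
    _ = k * μ (⋃ j ∈ s, A j) := lintegral_indicator_const hU k

variable {E : Type*} [NormedAddCommGroup E] [NormedSpace ℝ E] [FiniteDimensional ℝ E]

lemma exists_pairwise_norm_sub_lt_of_five_pow_mul_lt {ι : Type*} {k : ℕ} {s : Finset ι}
    {y : ι → E} {x : E} {R : ℝ} (hR : 0 < R) (hy : ∀ j ∈ s, ‖y j - x‖ ≤ 2 * R)
    (hs : 5 ^ finrank ℝ E * k < #s) :
    ∃ T ⊆ s, k < #T ∧ ∀ j ∈ T, ∀ l ∈ T, ‖y j - y l‖ < R := by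
  classical
  borelize E
  by_contra! hT
  have hmult : ∀ z, #{j ∈ s | z ∈ ball (y j) (R / 2)} ≤ k := by
    intro z
    by_contra! hz
    obtain ⟨j, hj, l, hl, hjl⟩ := hT _ (filter_subset _ _) hz
    simp only [mem_filter, mem_ball'] at hj hl
    have := dist_triangle (y j) z (y l)
    rw [dist_eq_norm] at this
    linarith [dist_comm z (y l)]
  let μ : Measure E := Measure.addHaar
  set V := μ (ball 0 (R / 2))
  have hV : V ≠ 0 := (measure_ball_pos μ _ (half_pos hR)).ne'
  have hVtop : V ≠ ⊤ := measure_ball_lt_top.ne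
  have hcover : ⋃ j ∈ s, ball (y j) (R / 2) ⊆ ball x (5 * (R / 2)) :=
    iUnion₂_subset fun j hj => ball_subset_ball' (by rw [dist_eq_norm]; linarith [hy j hj])
  have hvol : (#s : ℝ≥0∞) * V ≤ (5 ^ finrank ℝ E * k : ℕ) * V :=
    calc (#s : ℝ≥0∞) * V = ∑ j ∈ s, μ (ball (y j) (R / 2)) := by
          simp [μ.addHaar_ball_center, V]
      _ ≤ k * μ (⋃ j ∈ s, ball (y j) (R / 2)) :=
          sum_measure_le_mul_measure_biUnion μ (fun _ _ => measurableSet_ball) hmult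
      _ ≤ k * μ (ball x (5 * (R / 2))) := by gcongr
      _ = (5 ^ finrank ℝ E * k : ℕ) * V := by
          rw [μ.addHaar_ball_mul_of_pos x (by norm_num : (0 : ℝ) < 5)]
          simp [ENNReal.ofReal_pow]
          ring
  have := (ENNReal.mul_le_mul_iff_left hV hVtop).1 hvol
  exact_mod_cast (hs.trans_le (by exact_mod_cast this)).false

end Packing

section SphereOfInfluence

variable {ι E : Type*} [Finite ι] [NormedAddCommGroup E] [NormedSpace ℝ E]
  [FiniteDimensional ℝ E]

lemma ncard_neighborSet_lt_five_pow_mul {k : ℕ} (hk : 1 ≤ k) {c : ι → E}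
    (hc : Function.Injective c) {r : ι → ℝ} (hr : ∀ i, IsInfluenceRadius k c i (r i))
    {G : SimpleGraph ι}
    (hG : ∀ i j, G.Adj i j → (closedBall (c i) (r i) ∩ closedBall (c j) (r j)).Nonempty)
    {v w : ι} (hv : ∀ j ≠ w, r v ≤ r j) :
    (G.neighborSet v).ncard < 5 ^ finrank ℝ E * k := by
  classical
  by_contra! hdeg
  set R := r v
  have hR : 0 < R := (hr v).pos hk hc
  let s : Finset ι := insert v (Set.toFinite (G.neighborSet v)).toFinset
  have hs : 5 ^ finrank ℝ E * k < #s := by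
    rw [card_insert_of_notMem (by simp), ← Set.ncard_eq_toFinset_card]
    omega
  have hnear : ∀ j ∈ s, ‖c j - c v‖ ≤ R + r j := by
    intro j hj
    rcases mem_insert.1 hj with rfl | hj
    · rw [sub_self, norm_zero]
      linarith
    · obtain ⟨z, hzv, hzj⟩ := hG v j (by simpa using hj)
      rw [← dist_eq_norm]
      linarith [dist_triangle (c j) z (c v), mem_closedBall.1 hzv, mem_closedBall'.1 hzj]
  obtain ⟨T, hTs, hTk, hT⟩ := exists_pairwise_norm_sub_lt_of_five_pow_mul_lt hR
    (fun j _ => norm_radialRetraction_sub_le (c v) (c j) (by positivity)) hs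
  have hclose : ∀ j ∈ T, ∀ l ∈ T, ‖c j - c l‖ < max R (max (r j) (r l)) := by
    intro j hj l hl
    wlog hlj : ‖c l - c v‖ ≤ ‖c j - c v‖ generalizing j l
    · rw [norm_sub_rev, max_comm (r j)]
      exact this l hl j hj (le_of_not_ge hlj)
    calc ‖c j - c l‖ < max R (‖c j - c v‖ - 2 * R + R) :=
          norm_sub_lt_of_norm_radialRetraction_sub_lt (by linarith) hlj (hT j hj l hl)
      _ ≤ max R (max (r j) (r l)) :=
          max_le_max le_rfl (by linarith [hnear j (hTs hj), le_max_left (r j) (r l)])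
  obtain ⟨a, ha, hamax⟩ := T.exists_max_image r (card_pos.1 (by omega))
  have hRa : R ≤ r a := by
    obtain ⟨j, hj, hjw⟩ := T.exists_mem_ne (by omega) w
    exact (hv j hjw).trans (hamax j hj)
  obtain ⟨l, hl, hal⟩ := (hr a).exists_le_norm_sub hk (notMem_erase a T)
    (by rw [card_erase_of_mem ha]; omega)
  have := hclose a ha l (mem_of_mem_erase hl)
  rw [max_eq_left (hamax l (mem_of_mem_erase hl)), max_eq_right hRa] at this
  linarith

end SphereOfInfluence

theorem kth_soig_two_degrees_lt_five_pow_mul_general {N : Type*} [NormedAddCommGroup N]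
    [NormedSpace ℝ N] [FiniteDimensional ℝ N] (d : ℕ) (hdim : Module.finrank ℝ N = d)
    (k : ℕ) (hk : 1 ≤ k)
    (m : ℕ) (hm2 : 2 ≤ m)
    (c : Fin m → N) (hc : Function.Injective c)
    (r : Fin m → ℝ)
    (hr : ∀ i : Fin m,
      IsLeast {ρ : ℝ | 0 ≤ ρ ∧ k ≤ {j : Fin m | j ≠ i ∧ ‖c i - c j‖ ≤ ρ}.ncard} (r i))
    (G : SimpleGraph (Fin m))
    (hG : ∀ i j : Fin m, G.Adj i j ↔
      i ≠ j ∧ (Metric.closedBall (c i) (r i) ∩ Metric.closedBall (c j) (r j)).Nonempty) :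
    ∃ i j : Fin m, i ≠ j ∧
      (G.neighborSet i).ncard < 5 ^ d * k ∧ (G.neighborSet j).ncard < 5 ^ d * k := by
  subst hdim
  have hballs := fun i j (hij : G.Adj i j) => ((hG i j).1 hij).2
  obtain ⟨v₀, -, hv₀⟩ := univ.exists_min_image r (univ_nonempty_iff.2 ⟨⟨0, by omega⟩⟩)
  obtain ⟨v₁, hv₁, hv₁min⟩ := (univ.erase v₀).exists_min_image r
    (card_pos.1 (by rw [card_erase_of_mem (mem_univ _), card_univ, Fintype.card_fin]; omega))
  refine ⟨v₀, v₁, (ne_of_mem_erase hv₁).symm, ?_, ?_⟩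
  · exact ncard_neighborSet_lt_five_pow_mul hk hc hr hballs (w := v₀)
      fun j _ => hv₀ j (mem_univ j)
  · exact ncard_neighborSet_lt_five_pow_mul hk hc hr hballs
      fun j hj => hv₁min j (mem_erase.2 ⟨hj, mem_univ j⟩)

/-- Every `k`-th closed sphere-of-influence graph on at least two points in a
`d`-dimensional normed space has at least two vertices of degree less than
`5 ^ d · k`. -/
theorem kth_soig_two_degrees_lt_five_pow_mul {N : Type*} [NormedAddCommGroup N]
    [NormedSpace ℝ N] [FiniteDimensional ℝ N] (d : ℕ) (hdim : Module.finrank ℝ N = d)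
    (k : ℕ) (hk : 1 ≤ k)
    (m : ℕ) (hm2 : 2 ≤ m) (hmk : k + 1 ≤ m)
    (c : Fin m → N) (hc : Function.Injective c)
    (r : Fin m → ℝ)
    (hr : ∀ i : Fin m,
      IsLeast {ρ : ℝ | 0 ≤ ρ ∧ k ≤ {j : Fin m | j ≠ i ∧ ‖c i - c j‖ ≤ ρ}.ncard} (r i))
    (G : SimpleGraph (Fin m))
    (hG : ∀ i j : Fin m, G.Adj i j ↔
      i ≠ j ∧ (Metric.closedBall (c i) (r i) ∩ Metric.closedBall (c j) (r j)).Nonempty) :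
    ∃ i j : Fin m, i ≠ j ∧
      (G.neighborSet i).ncard < 5 ^ d * k ∧ (G.neighborSet j).ncard < 5 ^ d * k :=
  kth_soig_two_degrees_lt_five_pow_mul_general d hdim k hk m hm2 c hc r hr G hG
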